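/- Let X, W₁, W₂ be integrable mean-zero jointly independent real random variables and set Y₁ = X + W₁, Y₂ = X + W₂. Then the joint characteristic function φ(s,t) = E[exp(i(sY₁ + tY₂))] satisfies ∂φ/∂s(0, t) = φ_X'(t) φ_{W₂}(t), and φ(0,t) = φ_X(t) φ_{W₂}(t); hence on the set where φ(0,t) ≠ 0, the ratio (∂φ/∂s)(0,t)/φ(0,t) equals the logarithmic derivative φ_X'(t)/φ_X(t). -/

import Mathlib

/-!
Independence factors the joint characteristic function as
`cf2 s t = φ_X (s + t) φ_{W₁} s φ_{W₂} t`. Differentiating in `s` at `s = 0` and using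
`φ_{W₁} 0 = 1`, `φ_{W₁}' 0 = i E[W₁] = 0` leaves `φ_X' t φ_{W₂} t`.
-/

open MeasureTheory ProbabilityTheory

/-- Characteristic function of a real random variable. -/
noncomputable def cf {Ω : Type*} [MeasurableSpace Ω] (μ : Measure Ω) (X : Ω → ℝ) (u : ℝ) : ℂ :=
  ∫ ω, Complex.exp (Complex.I * u * X ω) ∂μ

/-- Joint characteristic function of `(X + W₁, X + W₂)`. -/
noncomputable def cf2 {Ω : Type*} [MeasurableSpace Ω] (μ : Measure Ω)
    (X W₁ W₂ : Ω → ℝ) (s t : ℝ) : ℂ :=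
  ∫ ω, Complex.exp (Complex.I *
    ((s : ℂ) * ((X ω : ℂ) + W₁ ω) + (t : ℂ) * ((X ω : ℂ) + W₂ ω))) ∂μ

open Complex

section

variable {Ω : Type*} [MeasurableSpace Ω] {μ : Measure Ω}

lemma cf_zero [IsProbabilityMeasure μ] (X : Ω → ℝ) : cf μ X 0 = 1 := by
  simp [cf]

lemma norm_exp_I_mul_ofReal_mul_ofReal (u x : ℝ) : ‖exp (I * u * x)‖ = 1 := by
  rw [mul_assoc, ← ofReal_mul, norm_exp_I_mul_ofReal]

lemma hasDerivAt_cf [IsFiniteMeasure μ] {X : Ω → ℝ} (hXm : AEMeasurable X μ)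
    (hX : Integrable X μ) (u : ℝ) :
    HasDerivAt (cf μ X) (∫ ω, I * X ω * exp (I * u * X ω) ∂μ) u := by
  have hexp_meas : ∀ v : ℝ, AEStronglyMeasurable (fun ω ↦ exp (I * v * X ω)) μ := by
    fun_prop
  unfold cf
  refine (hasDerivAt_integral_of_dominated_loc_of_deriv_le (bound := fun ω ↦ |X ω|)
    (F' := fun v ω ↦ I * X ω * exp (I * v * X ω))
    Filter.univ_mem (.of_forall fun v ↦ hexp_meas v) ?_ ?_ ?_ hX.abs ?_).2
  · refine (integrable_const (1 : ℝ)).mono' (hexp_meas u) (.of_forall fun ω ↦ ?_)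
    rw [norm_exp_I_mul_ofReal_mul_ofReal]
  · fun_prop
  · refine .of_forall fun ω v _ ↦ ?_
    rw [norm_mul, norm_mul, norm_exp_I_mul_ofReal_mul_ofReal, norm_I, one_mul, mul_one,
      norm_real, Real.norm_eq_abs]
  · refine .of_forall fun ω v _ ↦ ?_
    have h := (((hasDerivAt_id' (v : ℂ)).const_mul I).mul_const (X ω : ℂ)).cexp.comp_ofReal
    exact h.congr_deriv (by ring)

lemma hasDerivAt_cf_zero [IsProbabilityMeasure μ] {X : Ω → ℝ} (hXm : AEMeasurable X μ)
    (hX : Integrable X μ) : HasDerivAt (cf μ X) (I * ∫ ω, X ω ∂μ) 0 := by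
  convert hasDerivAt_cf hXm hX 0 using 1
  simp [integral_const_mul, integral_complex_ofReal]

lemma cf2_eq_mul {X W₁ W₂ : Ω → ℝ} (hindep : iIndepFun ![X, W₁, W₂] μ)
    (hXm : AEMeasurable X μ) (hW₁m : AEMeasurable W₁ μ) (hW₂m : AEMeasurable W₂ μ) (s t : ℝ) :
    cf2 μ X W₁ W₂ s t = cf μ X (s + t) * cf μ W₁ s * cf μ W₂ t := by
  have hprod := hindep.integral_fun_prod_comp (𝓧 := fun _ ↦ ℝ)
    (f := fun i x ↦ exp (I * ![s + t, s, t] i * x)) (fun i ↦ by fin_cases i <;> assumption) (fun i ↦ by fun_prop)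
  calc cf2 μ X W₁ W₂ s t
      = ∫ ω, exp (I * ↑(s + t) * X ω) * exp (I * s * W₁ ω) * exp (I * t * W₂ ω) ∂μ := by
        refine integral_congr_ae (.of_forall fun ω ↦ ?_)
        simp only [← exp_add]
        push_cast
        ring_nf
    _ = cf μ X (s + t) * cf μ W₁ s * cf μ W₂ t := by
        simpa [Fin.prod_univ_three, cf] using hprod

lemma hasDerivAt_cf2_fst_zero [IsProbabilityMeasure μ] {X W₁ W₂ : Ω → ℝ}
    (hindep : iIndepFun ![X, W₁, W₂] μ)
    (hXm : AEMeasurable X μ) (hW₁m : AEMeasurable W₁ μ) (hW₂m : AEMeasurable W₂ μ)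
    (hX : Integrable X μ) (hW₁ : Integrable W₁ μ) (hmW₁ : ∫ ω, W₁ ω ∂μ = 0) (t : ℝ) :
    HasDerivAt (fun s ↦ cf2 μ X W₁ W₂ s t) (deriv (cf μ X) t * cf μ W₂ t) 0 := by
  have hX' : HasDerivAt (fun s ↦ cf μ X (s + t)) (deriv (cf μ X) t) 0 := by
    refine HasDerivAt.comp_add_const 0 t ?_
    rw [zero_add]
    exact (hasDerivAt_cf hXm hX t).differentiableAt.hasDerivAt
  have hW₁' : HasDerivAt (cf μ W₁) 0 0 := by
    simpa [hmW₁] using hasDerivAt_cf_zero hW₁m hW₁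
  simp_rw [cf2_eq_mul hindep hXm hW₁m hW₂m]
  simpa [cf_zero] using (hX'.mul hW₁').mul_const (cf μ W₂ t)

end

theorem stmt_17_general {Ω : Type*} [MeasurableSpace Ω] (μ : Measure Ω) [IsProbabilityMeasure μ]
    (X W₁ W₂ : Ω → ℝ) (hXm : Measurable X) (hW₁m : Measurable W₁) (hW₂m : Measurable W₂)
    (hX : Integrable X μ) (hW₁ : Integrable W₁ μ)
    (hmW₁ : ∫ ω, W₁ ω ∂μ = 0)
    (hindep : iIndepFun (m := fun _ => Real.measurableSpace) ![X, W₁, W₂] μ) :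
    ∀ t : ℝ,
      deriv (fun s : ℝ => cf2 μ X W₁ W₂ s t) 0 = deriv (cf μ X) t * cf μ W₂ t ∧
      cf2 μ X W₁ W₂ 0 t = cf μ X t * cf μ W₂ t ∧
      (cf2 μ X W₁ W₂ 0 t ≠ 0 →
        deriv (fun s : ℝ => cf2 μ X W₁ W₂ s t) 0 / cf2 μ X W₁ W₂ 0 t
          = deriv (cf μ X) t / cf μ X t) := by
  intro t
  have hderiv := (hasDerivAt_cf2_fst_zero hindep hXm.aemeasurable hW₁m.aemeasurable
    hW₂m.aemeasurable hX hW₁ hmW₁ t).deriv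
  have hvalue : cf2 μ X W₁ W₂ 0 t = cf μ X t * cf μ W₂ t := by
    simp [cf2_eq_mul hindep hXm.aemeasurable hW₁m.aemeasurable hW₂m.aemeasurable, cf_zero]
  refine ⟨hderiv, hvalue, fun hne ↦ ?_⟩
  rw [hvalue] at hne ⊢
  rw [hderiv, mul_div_mul_right _ _ (right_ne_zero_of_mul hne)]

theorem stmt_17 {Ω : Type*} [MeasurableSpace Ω] (μ : Measure Ω) [IsProbabilityMeasure μ]
    (X W₁ W₂ : Ω → ℝ) (hXm : Measurable X) (hW₁m : Measurable W₁) (hW₂m : Measurable W₂)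
    (hX : Integrable X μ) (hW₁ : Integrable W₁ μ) (hW₂ : Integrable W₂ μ)
    (hmX : ∫ ω, X ω ∂μ = 0) (hmW₁ : ∫ ω, W₁ ω ∂μ = 0) (hmW₂ : ∫ ω, W₂ ω ∂μ = 0)
    (hindep : iIndepFun (m := fun _ => Real.measurableSpace) ![X, W₁, W₂] μ) :
    ∀ t : ℝ,
      deriv (fun s : ℝ => cf2 μ X W₁ W₂ s t) 0 = deriv (cf μ X) t * cf μ W₂ t ∧
      cf2 μ X W₁ W₂ 0 t = cf μ X t * cf μ W₂ t ∧
      (cf2 μ X W₁ W₂ 0 t ≠ 0 →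
        deriv (fun s : ℝ => cf2 μ X W₁ W₂ s t) 0 / cf2 μ X W₁ W₂ 0 t
          = deriv (cf μ X) t / cf μ X t) :=
  stmt_17_general μ X W₁ W₂ hXm hW₁m hW₂m hX hW₁ hmW₁ hindep
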